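/- arXiv:2402.06324 — 9 statements merged into one kernel-verified Lean document; each statement's English description precedes it below -/
import Mathlib

section
/- Let 0 < p < ∞, let X be a normed space, and let (x_k) be a sequence in X. If (x_k) is strongly p-Cesàro summable to L ∈ X, then (x_k) is statistically convergent to L. -/
open Filter Finset

/-- Strong p-Cesàro summability of a sequence to a limit. -/
def StrongCesaro {X : Type*} [NormedAddCommGroup X] (p : ℝ) (x : ℕ → X) (L : X) : Prop :=
  Tendsto (fun n : ℕ => (n : ℝ)⁻¹ * ∑ k ∈ range n, ‖x k - L‖ ^ p) atTop (nhds 0)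

/-- Statistical convergence: the set of indices where the sequence stays `ε`-far from `L`
has natural density zero, for every `ε > 0`. -/
def StatConv {X : Type*} [NormedAddCommGroup X] (x : ℕ → X) (L : X) : Prop :=
  ∀ ε : ℝ, 0 < ε →
    Tendsto (fun n : ℕ =>
      (((range n).filter fun k => ε ≤ ‖x k - L‖).card : ℝ) / n) atTop (nhds 0)

theorem Finset.card_filter_le_mul_le_sum {ι : Type*} (s : Finset ι) (f : ι → ℝ)
    (hf : ∀ i ∈ s, 0 ≤ f i) (a : ℝ) :
    ((s.filter fun i => a ≤ f i).card : ℝ) * a ≤ ∑ i ∈ s, f i :=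
  calc ((s.filter fun i => a ≤ f i).card : ℝ) * a
      = ∑ _i ∈ s.filter fun i => a ≤ f i, a := by rw [sum_const, nsmul_eq_mul]
    _ ≤ ∑ i ∈ s.filter fun i => a ≤ f i, f i := sum_le_sum fun i hi => (mem_filter.mp hi).2
    _ ≤ ∑ i ∈ s, f i :=
        sum_le_sum_of_subset_of_nonneg (filter_subset _ _) fun i hi _ => hf i hi

theorem Finset.card_filter_le_norm_le_rpow_sum {ι X : Type*} [SeminormedAddCommGroup X]
    {p ε : ℝ} (hp : 0 ≤ p) (hε : 0 < ε) (s : Finset ι) (y : ι → X) :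
    ((s.filter fun i => ε ≤ ‖y i‖).card : ℝ) ≤ (ε ^ p)⁻¹ * ∑ i ∈ s, ‖y i‖ ^ p := by
  have hεp : 0 < ε ^ p := Real.rpow_pos_of_pos hε p
  have hfilter : s.filter (fun i => ε ≤ ‖y i‖) ⊆ s.filter fun i => ε ^ p ≤ ‖y i‖ ^ p :=
    monotone_filter_right s fun _ _ hi => Real.rpow_le_rpow hε.le hi hp
  rw [inv_mul_eq_div, le_div_iff₀ hεp]
  calc ((s.filter fun i => ε ≤ ‖y i‖).card : ℝ) * ε ^ p
      ≤ ((s.filter fun i => ε ^ p ≤ ‖y i‖ ^ p).card : ℝ) * ε ^ p := by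
        gcongr
    _ ≤ ∑ i ∈ s, ‖y i‖ ^ p :=
        card_filter_le_mul_le_sum s _ (fun i _ => Real.rpow_nonneg (norm_nonneg _) p) _

theorem statement2_general {X : Type*} [NormedAddCommGroup X]
    (p : ℝ) (hp : 0 < p) (x : ℕ → X) (L : X)
    (h : StrongCesaro p x L) : StatConv x L := by
  intro ε hε
  have hbound (n : ℕ) : (((range n).filter fun k => ε ≤ ‖x k - L‖).card : ℝ) / n ≤
      (ε ^ p)⁻¹ * ((n : ℝ)⁻¹ * ∑ k ∈ range n, ‖x k - L‖ ^ p) := by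
    rw [div_eq_inv_mul, mul_left_comm]
    gcongr
    exact card_filter_le_norm_le_rpow_sum hp.le hε _ _
  have hlim := h.const_mul (ε ^ p)⁻¹
  rw [mul_zero] at hlim
  exact squeeze_zero (fun n => by positivity) hbound hlim

theorem statement2 {X : Type*} [NormedAddCommGroup X] [NormedSpace ℝ X]
    (p : ℝ) (hp : 0 < p) (x : ℕ → X) (L : X)
    (h : StrongCesaro p x L) : StatConv x L :=
  statement2_general p hp x L h
end

section
/- Let 0 < p < ∞, let X be a normed space, and let (x_k) be a bounded sequence in X. If (x_k) is statistically convergent to L ∈ X, then (x_k) is strongly p-Cesàro summable to L. -/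
open Filter Finset

/-!
Split the terms at a threshold `ε`: those with `‖x k - L‖ < ε` contribute at most `ε ^ p` each,
and the others, bounded by `M ^ p` each, have density tending to `0` by statistical convergence.
Hence the Cesàro means are eventually below `ε ^ p + o(1)`, and `ε ^ p` is arbitrarily small.
-/

open Topology

section
variable {a : ℕ → ℝ} {M ε p : ℝ}

lemma rpow_le_ite_add_rpow {t : ℝ} (ht : 0 ≤ t) (htM : t ≤ M) (hε : 0 ≤ ε) (hp : 0 ≤ p) :
    t ^ p ≤ (if ε ≤ t then M ^ p else 0) + ε ^ p := by
  split_ifs with htε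
  · have := Real.rpow_nonneg hε p
    linarith [Real.rpow_le_rpow ht htM hp]
  · simpa using Real.rpow_le_rpow ht (not_le.mp htε).le hp

lemma sum_rpow_le (ha : ∀ k, 0 ≤ a k) (haM : ∀ k, a k ≤ M) (hε : 0 ≤ ε) (hp : 0 ≤ p)
    (n : ℕ) : ∑ k ∈ range n, a k ^ p ≤ #{k ∈ range n | ε ≤ a k} * M ^ p + n * ε ^ p := by
  calc ∑ k ∈ range n, a k ^ p
      ≤ ∑ k ∈ range n, ((if ε ≤ a k then M ^ p else 0) + ε ^ p) :=
        sum_le_sum fun k _ => rpow_le_ite_add_rpow (ha k) (haM k) hε hp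
    _ = #{k ∈ range n | ε ≤ a k} * M ^ p + n * ε ^ p := by
        rw [sum_add_distrib, ← sum_filter]
        simp

lemma cesaro_rpow_le (ha : ∀ k, 0 ≤ a k) (haM : ∀ k, a k ≤ M) (hε : 0 ≤ ε) (hp : 0 ≤ p)
    (n : ℕ) :
    (n : ℝ)⁻¹ * ∑ k ∈ range n, a k ^ p ≤ #{k ∈ range n | ε ≤ a k} / n * M ^ p + ε ^ p := by
  rcases n.eq_zero_or_pos with rfl | hn
  · simpa using Real.rpow_nonneg hε p
  · have hn' : (n : ℝ) ≠ 0 := by positivity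
    calc (n : ℝ)⁻¹ * ∑ k ∈ range n, a k ^ p
        ≤ (n : ℝ)⁻¹ * (#{k ∈ range n | ε ≤ a k} * M ^ p + n * ε ^ p) := by
          gcongr
          exact sum_rpow_le ha haM hε hp n
      _ = #{k ∈ range n | ε ≤ a k} / n * M ^ p + ε ^ p := by
          field_simp

lemma exists_pos_rpow_lt (hp : 0 < p) {δ : ℝ} (hδ : 0 < δ) : ∃ ε > 0, ε ^ p < δ := by
  have hcont : Tendsto (fun t : ℝ => t ^ p) (𝓝[>] 0) (𝓝 0) := by
    simpa [Real.zero_rpow hp.ne'] using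
      (Real.continuousAt_rpow_const 0 p (Or.inr hp.le)).tendsto.mono_left nhdsWithin_le_nhds
  obtain ⟨ε, hεδ, hε⟩ := ((hcont.eventually (gt_mem_nhds hδ)).and self_mem_nhdsWithin).exists
  exact ⟨ε, hε, hεδ⟩

theorem tendsto_cesaro_rpow_of_density_tendsto_zero (ha : ∀ k, 0 ≤ a k) (haM : ∀ k, a k ≤ M)
    (hp : 0 < p)
    (hdens : ∀ ε > 0, Tendsto (fun n : ℕ => (#{k ∈ range n | ε ≤ a k} : ℝ) / n) atTop (𝓝 0)) :
    Tendsto (fun n : ℕ => (n : ℝ)⁻¹ * ∑ k ∈ range n, a k ^ p) atTop (𝓝 0) := by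
  refine tendsto_order.2 ⟨fun δ hδ => Eventually.of_forall fun n => ?_, fun δ hδ => ?_⟩
  · exact hδ.trans_le <| mul_nonneg (by positivity) <|
      sum_nonneg fun k _ => Real.rpow_nonneg (ha k) p
  obtain ⟨ε, hε, hεδ⟩ := exists_pos_rpow_lt hp hδ
  have hbound : Tendsto (fun n : ℕ => (#{k ∈ range n | ε ≤ a k} : ℝ) / n * M ^ p + ε ^ p)
      atTop (𝓝 (ε ^ p)) := by
    simpa using ((hdens ε hε).mul_const (M ^ p)).add_const (ε ^ p)
  filter_upwards [hbound.eventually (gt_mem_nhds hεδ)] with n hn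
  exact (cesaro_rpow_le ha haM hε.le hp.le n).trans_lt hn

end

theorem statement3_general {X : Type*} [NormedAddCommGroup X]
    (p : ℝ) (hp : 0 < p) (x : ℕ → X) (L : X)
    (hbdd : ∃ C : ℝ, ∀ k, ‖x k‖ ≤ C)
    (h : StatConv x L) : StrongCesaro p x L := by
  obtain ⟨C, hC⟩ := hbdd
  exact tendsto_cesaro_rpow_of_density_tendsto_zero (fun k => norm_nonneg _)
    (fun k => norm_sub_le_of_le (hC k) le_rfl) hp h

theorem statement3 {X : Type*} [NormedAddCommGroup X] [NormedSpace ℝ X]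
    (p : ℝ) (hp : 0 < p) (x : ℕ → X) (L : X)
    (hbdd : ∃ C : ℝ, ∀ k, ‖x k‖ ≤ C)
    (h : StatConv x L) : StrongCesaro p x L :=
  statement3_general p hp x L hbdd h
end

section
/- There exists an unbounded real sequence that is statistically convergent to 0 but not strongly p-Cesàro summable to any real number; e.g., for fixed p > 0 the sequence x_k = j^{2/p} if k = j^2 for some j and x_k = 0 otherwise. -/
/-!
Take `x` equal to `(j ^ 2) ^ (1 / p)` at the squares `j ^ 2` and `0` elsewhere. Since the squares
have density zero, `x` is statistically convergent to `0`. By Markov's inequality for the counting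
measure, strong `p`-Cesàro summability to `L` implies statistical convergence to `L`, and
statistical limits are unique, so the only candidate limit is `0`. But `|x k| ^ p = k` at every
square `k`, so the `p`-Cesàro mean at `n = k + 1` is at least `k / (k + 1)`.
-/

open Filter Finset

open Topology

def HasNatDensityZero (P : ℕ → Prop) [DecidablePred P] : Prop :=
  Tendsto (fun n : ℕ => (((range n).filter P).card : ℝ) / n) atTop (𝓝 0)

theorem HasNatDensityZero.mono {P Q : ℕ → Prop} [DecidablePred P] [DecidablePred Q]
    (hQ : HasNatDensityZero Q) (hPQ : ∀ k, P k → Q k) : HasNatDensityZero P := by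
  refine squeeze_zero (fun n => by positivity) (fun n => ?_) hQ
  gcongr
  exact hPQ _

theorem card_filter_isSquare_range_le (n : ℕ) :
    (((range n).filter IsSquare).card : ℝ) ≤ √(n : ℝ) + 1 := by
  have hsub : (range n).filter IsSquare ⊆ (range (Nat.sqrt n + 1)).image fun j => j * j := by
    rintro k hk
    obtain ⟨hkn, j, rfl⟩ := mem_filter.1 hk
    exact mem_image.2 ⟨j, mem_range.2 (Nat.lt_succ_of_le
      (Nat.le_sqrt.2 (mem_range.1 hkn).le)), rfl⟩
  calc (((range n).filter IsSquare).card : ℝ)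
      ≤ (Nat.sqrt n + 1 : ℕ) := by
        exact_mod_cast (card_le_card hsub).trans card_image_le |>.trans (card_range _).le
    _ ≤ √(n : ℝ) + 1 := by push_cast; gcongr; exact Real.nat_sqrt_le_real_sqrt

theorem hasNatDensityZero_isSquare : HasNatDensityZero IsSquare := by
  have hlim : Tendsto (fun n : ℕ => (√(n : ℝ))⁻¹ + (n : ℝ)⁻¹) atTop (𝓝 0) := by
    simpa using (tendsto_inv_atTop_zero.comp
      (Real.tendsto_sqrt_atTop.comp tendsto_natCast_atTop_atTop)).add
      tendsto_inv_atTop_nhds_zero_nat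
  refine squeeze_zero (fun n => by positivity) (fun n => ?_) hlim
  calc (((range n).filter IsSquare).card : ℝ) / n ≤ (√(n : ℝ) + 1) / n := by
        gcongr; exact card_filter_isSquare_range_le n
    _ = (√(n : ℝ))⁻¹ + (n : ℝ)⁻¹ := by rw [add_div, Real.sqrt_div_self, one_div]

section NormedAddCommGroup

variable {X : Type*} [NormedAddCommGroup X] {x : ℕ → X}

theorem statConv_zero_of_support_subset {P : ℕ → Prop} [DecidablePred P]
    (hP : HasNatDensityZero P) (hx : ∀ k, x k ≠ 0 → P k) : StatConv x 0 := fun ε hε =>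
  hP.mono fun k hk => hx k fun h0 => by simp [h0] at hk; linarith

theorem StatConv.unique {L L' : X} (hL : StatConv x L) (hL' : StatConv x L') : L = L' := by
  by_contra hne
  set ε := ‖L - L'‖ / 2 with hε_def
  have hε : 0 < ε := half_pos (norm_pos_iff.2 (sub_ne_zero.2 hne))
  have hcover : ∀ n : ℕ, 0 < n → (1 : ℝ) ≤
      (((range n).filter fun k => ε ≤ ‖x k - L‖).card : ℝ) / n +
      (((range n).filter fun k => ε ≤ ‖x k - L'‖).card : ℝ) / n := by
    intro n hn
    rw [← add_div, le_div_iff₀ (by exact_mod_cast hn), one_mul]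
    have hunion : range n ⊆ (range n).filter (fun k => ε ≤ ‖x k - L‖) ∪
        (range n).filter (fun k => ε ≤ ‖x k - L'‖) := by
      intro k hk
      by_contra hk'
      simp only [mem_union, mem_filter, hk, true_and, not_or, not_le] at hk'
      have := norm_sub_le_norm_sub_add_norm_sub L (x k) L'
      rw [norm_sub_rev L (x k)] at this
      linarith
    exact_mod_cast (card_range n).symm.le.trans ((card_le_card hunion).trans (card_union_le _ _))
  have hlim := (hL ε hε).add (hL' ε hε)
  rw [add_zero] at hlim
  exact one_pos.not_ge (ge_of_tendsto hlim ((eventually_gt_atTop 0).mono hcover))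

theorem StrongCesaro.statConv {p : ℝ} (hp : 0 < p) {L : X} (h : StrongCesaro p x L) :
    StatConv x L := by
  intro ε hε
  have hεp : 0 < ε ^ p := Real.rpow_pos_of_pos hε p
  refine squeeze_zero (fun n => by positivity) (fun n => ?_)
    (by simpa using h.const_mul (ε ^ p)⁻¹)
  set S := (range n).filter fun k => ε ≤ ‖x k - L‖
  have hmarkov : (S.card : ℝ) * ε ^ p ≤ ∑ k ∈ range n, ‖x k - L‖ ^ p :=
    calc (S.card : ℝ) * ε ^ p ≤ ∑ k ∈ S, ‖x k - L‖ ^ p := by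
          rw [← nsmul_eq_mul]
          exact card_nsmul_le_sum _ _ _ fun k hk =>
            Real.rpow_le_rpow hε.le (mem_filter.1 hk).2 hp.le
      _ ≤ ∑ k ∈ range n, ‖x k - L‖ ^ p :=
          sum_le_sum_of_subset_of_nonneg (filter_subset _ _) fun k _ _ => by positivity
  calc (S.card : ℝ) / n ≤ ((ε ^ p)⁻¹ * ∑ k ∈ range n, ‖x k - L‖ ^ p) / n := by
        gcongr; rwa [le_inv_mul_iff₀' hεp]
    _ = (ε ^ p)⁻¹ * ((n : ℝ)⁻¹ * ∑ k ∈ range n, ‖x k - L‖ ^ p) := by ring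

theorem not_strongCesaro_zero_of_frequently {p : ℝ}
    (hx : ∃ᶠ k : ℕ in atTop, (k : ℝ) ≤ ‖x k‖ ^ p) : ¬ StrongCesaro p x 0 := by
  intro h
  obtain ⟨N, hN⟩ := eventually_atTop.1 (h.eventually_lt_const one_half_pos)
  obtain ⟨k, hkN, hk⟩ := frequently_atTop.1 hx (N + 1)
  have hsum : (k : ℝ) ≤ ∑ j ∈ range (k + 1), ‖x j - 0‖ ^ p := by
    simpa using hk.trans (single_le_sum (f := fun j => ‖x j‖ ^ p)
      (fun j _ => by positivity) (self_mem_range_succ k))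
  have hk1 : (1 : ℝ) ≤ k := by exact_mod_cast (Nat.le_add_left 1 N).trans hkN
  have hmean := hN (k + 1) (by omega)
  rw [inv_mul_lt_iff₀ (by positivity)] at hmean
  push_cast at hmean
  linarith

theorem not_bddAbove_norm_of_frequently {p : ℝ} (hp : 0 < p)
    (hx : ∃ᶠ k : ℕ in atTop, (k : ℝ) ≤ ‖x k‖ ^ p) :
    ¬ BddAbove (Set.range fun k => ‖x k‖) := by
  rintro ⟨M, hM⟩
  obtain ⟨k, hkM, hk⟩ := frequently_atTop.1 hx (⌈M ^ p⌉₊ + 1)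
  have hxk : ‖x k‖ ≤ M := hM ⟨k, rfl⟩
  have : (k : ℝ) ≤ M ^ p := hk.trans (Real.rpow_le_rpow (norm_nonneg _) hxk hp.le)
  exact (Nat.lt_of_ceil_lt hkM).not_ge this

end NormedAddCommGroup

/-- At `k = j ^ 2` the value is `j ^ (2 / p)`. -/
noncomputable def squareSpikes (p : ℝ) (k : ℕ) : ℝ :=
  if IsSquare k then (k : ℝ) ^ p⁻¹ else 0

theorem norm_squareSpikes_rpow {p : ℝ} (hp : p ≠ 0) {k : ℕ} (hk : IsSquare k) :
    ‖squareSpikes p k‖ ^ p = k := by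
  rw [squareSpikes, if_pos hk, Real.norm_of_nonneg (by positivity),
    Real.rpow_inv_rpow (Nat.cast_nonneg k) hp]

theorem frequently_le_norm_squareSpikes_rpow {p : ℝ} (hp : p ≠ 0) :
    ∃ᶠ k : ℕ in atTop, (k : ℝ) ≤ ‖squareSpikes p k‖ ^ p :=
  frequently_atTop.2 fun N =>
    ⟨N * N, Nat.le_mul_self N, (norm_squareSpikes_rpow hp ⟨N, rfl⟩).ge⟩

theorem statConv_squareSpikes (p : ℝ) : StatConv (squareSpikes p) 0 :=
  statConv_zero_of_support_subset hasNatDensityZero_isSquare fun k hk => by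
    by_contra hsq
    exact hk (if_neg hsq)

theorem statement4 (p : ℝ) (hp : 0 < p) :
    ∃ x : ℕ → ℝ, ¬ BddAbove (Set.range fun k => |x k|) ∧
      StatConv x 0 ∧ ∀ L : ℝ, ¬ StrongCesaro p x L := by
  have hspikes := frequently_le_norm_squareSpikes_rpow hp.ne'
  have hstat := statConv_squareSpikes p
  refine ⟨squareSpikes p, by simpa only [Real.norm_eq_abs] using
    not_bddAbove_norm_of_frequently hp hspikes, hstat, fun L hL => ?_⟩
  obtain rfl : L = 0 := (hL.statConv hp).unique hstat
  exact not_strongCesaro_zero_of_frequently hspikes hL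
end

section
/- The real sequence defined by x_k = r^2 if k = r^3 for some r ∈ ℕ and x_k = 0 otherwise is strongly (1/2)-Cesàro summable to 0, but its Cesàro means (1/n) ∑_{k=1}^n x_k do not converge to 0. -/
open Filter Finset

open Classical in
/-- `x k = r ^ 2` if `k = r ^ 3` for some `r`, else `0`. -/
noncomputable def cubeSqSeq (k : ℕ) : ℝ :=
  if h : ∃ r : ℕ, k = r ^ 3 then ((h.choose : ℝ) ^ 2) else 0

/-! Only the cubes `r ^ 3 < n` contribute to the partial sums up to `n`, so
`∑ k < n, √x_k = ∑ r ^ 3 < n, r ≤ (n^(1/3) + 1) n^(1/3)`, whose mean is `O(n^(-1/3))`.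
On the other hand `∑ k ≤ m ^ 3, x_k = ∑ r ≤ m, r ^ 2 ≥ m ^ 3 / 3`, so along `n = m ^ 3 + 1`
the plain means stay above `1 / 6`. -/

theorem Finset.sum_range_eq_sum_cubes {M : Type*} [AddCommMonoid M] {f : ℕ → M}
    (hf : ∀ k, (¬∃ r, k = r ^ 3) → f k = 0) (n : ℕ) :
    ∑ k ∈ range n, f k = ∑ r ∈ range n with r ^ 3 < n, f (r ^ 3) := by
  rw [← sum_image fun a _ b _ hab => Nat.pow_left_injective (by norm_num) hab]
  refine (sum_subset (fun k hk => ?_) fun k hkn hk => hf k ?_).symm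
  · obtain ⟨r, hr, rfl⟩ := mem_image.mp hk
    exact mem_range.mpr (mem_filter.mp hr).2
  · rintro ⟨r, rfl⟩
    have hrn : r ^ 3 < n := mem_range.mp hkn
    exact hk (mem_image.mpr ⟨r, mem_filter.mpr ⟨mem_range.mpr (lt_of_le_of_lt
      (Nat.le_self_pow (by norm_num) r) hrn), hrn⟩, rfl⟩)

theorem cubeSqSeq_cube (r : ℕ) : cubeSqSeq (r ^ 3) = (r : ℝ) ^ 2 := by
  have h : ∃ s : ℕ, r ^ 3 = s ^ 3 := ⟨r, rfl⟩
  rw [cubeSqSeq, dif_pos h, Nat.pow_left_injective (by norm_num) h.choose_spec.symm]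

theorem cubeSqSeq_of_not_cube {k : ℕ} (h : ¬∃ r : ℕ, k = r ^ 3) : cubeSqSeq k = 0 :=
  dif_neg h

theorem sum_range_cubeSqSeq (n : ℕ) :
    ∑ k ∈ range n, cubeSqSeq k = ∑ r ∈ range n with r ^ 3 < n, (r : ℝ) ^ 2 := by
  simp only [sum_range_eq_sum_cubes (fun _ => cubeSqSeq_of_not_cube) n, cubeSqSeq_cube]

theorem sum_range_rpow_half_cubeSqSeq (n : ℕ) :
    ∑ k ∈ range n, ‖cubeSqSeq k - 0‖ ^ ((1 : ℝ) / 2) = ∑ r ∈ range n with r ^ 3 < n, (r : ℝ) := by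
  rw [sum_range_eq_sum_cubes (fun k hk => by simp [cubeSqSeq_of_not_cube hk]) n]
  refine sum_congr rfl fun r _ => ?_
  rw [cubeSqSeq_cube, sub_zero, Real.norm_of_nonneg (by positivity), ← Real.sqrt_eq_rpow,
    Real.sqrt_sq r.cast_nonneg]

theorem Finset.sum_natCast_le_of_forall_le {s : Finset ℕ} {t : ℝ} (ht : 0 ≤ t)
    (hs : ∀ r ∈ s, (r : ℝ) ≤ t) : ∑ r ∈ s, (r : ℝ) ≤ (t + 1) * t := by
  have hcard : (#s : ℝ) ≤ t + 1 := by
    have : #s ≤ ⌊t⌋₊ + 1 := by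
      simpa using card_le_card fun r hr =>
        mem_range.mpr (Nat.lt_succ_of_le (Nat.le_floor (hs r hr)))
    calc (#s : ℝ) ≤ ⌊t⌋₊ + 1 := by exact_mod_cast this
      _ ≤ t + 1 := by gcongr; exact Nat.floor_le ht
  calc ∑ r ∈ s, (r : ℝ) ≤ #s • t := sum_le_card_nsmul _ _ _ hs
    _ ≤ (t + 1) * t := by rw [nsmul_eq_mul]; gcongr

theorem cube_div_three_le_sum_range_succ_sq (m : ℕ) :
    (m : ℝ) ^ 3 / 3 ≤ ∑ r ∈ range (m + 1), (r : ℝ) ^ 2 := by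
  induction m with
  | zero => simp
  | succ m ih =>
    rw [sum_range_succ]
    push_cast
    nlinarith [(Nat.cast_nonneg m : (0 : ℝ) ≤ m)]

theorem filter_cube_lt_cube_add_one (m : ℕ) :
    {r ∈ range (m ^ 3 + 1) | r ^ 3 < m ^ 3 + 1} = range (m + 1) := by
  ext r
  simp only [mem_filter, mem_range, Nat.lt_succ_iff, Nat.pow_le_pow_iff_left (by norm_num : 3 ≠ 0),
    and_iff_right_iff_imp]
  exact fun hr => hr.trans (Nat.le_self_pow (by norm_num) m)

theorem mean_rpow_half_cubeSqSeq_le {n : ℕ} (hn : 1 ≤ n) :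
    (n : ℝ)⁻¹ * ∑ k ∈ range n, ‖cubeSqSeq k - 0‖ ^ ((1 : ℝ) / 2)
      ≤ 2 * ((n : ℝ) ^ ((3 : ℕ) : ℝ)⁻¹)⁻¹ := by
  set t := (n : ℝ) ^ ((3 : ℕ) : ℝ)⁻¹
  have ht3 : t ^ 3 = n := Real.rpow_inv_natCast_pow n.cast_nonneg (by norm_num)
  have ht1 : 1 ≤ t := Real.one_le_rpow (by exact_mod_cast hn) (by positivity)
  have hle : ∀ r ∈ ({r ∈ range n | r ^ 3 < n} : Finset ℕ), (r : ℝ) ≤ t := fun r hr => by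
    refine le_of_pow_le_pow_left₀ (by norm_num : 3 ≠ 0) (by positivity) ?_
    rw [ht3]; exact_mod_cast (mem_filter.mp hr).2.le
  calc (n : ℝ)⁻¹ * ∑ k ∈ range n, ‖cubeSqSeq k - 0‖ ^ ((1 : ℝ) / 2)
      ≤ (t ^ 3)⁻¹ * ((t + 1) * t) := by
        rw [sum_range_rpow_half_cubeSqSeq, ht3]
        gcongr
        exact sum_natCast_le_of_forall_le (by positivity) hle
    _ ≤ 2 * t⁻¹ := by
        field_simp
        nlinarith

theorem mean_cubeSqSeq_cube_add_one_ge {m : ℕ} (hm : 1 ≤ m) :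
    (1 : ℝ) / 6 ≤ ((m ^ 3 + 1 : ℕ) : ℝ)⁻¹ * ∑ k ∈ range (m ^ 3 + 1), cubeSqSeq k := by
  rw [sum_range_cubeSqSeq, filter_cube_lt_cube_add_one, inv_mul_eq_div,
    le_div_iff₀ (by positivity)]
  have hm3 : (1 : ℝ) ≤ (m : ℝ) ^ 3 := one_le_pow₀ (by exact_mod_cast hm)
  push_cast
  linarith [cube_div_three_le_sum_range_succ_sq m]

theorem statement6 :
    StrongCesaro ((1 : ℝ) / 2) cubeSqSeq 0 ∧
    ¬ Tendsto (fun n : ℕ => (n : ℝ)⁻¹ * ∑ k ∈ range n, cubeSqSeq k) atTop (nhds 0) := by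
  refine ⟨?_, fun h => ?_⟩
  · refine squeeze_zero' (Eventually.of_forall fun n => by positivity)
      ((eventually_ge_atTop 1).mono fun n hn => mean_rpow_half_cubeSqSeq_le hn) ?_
    simpa using ((tendsto_rpow_atTop (by positivity)).comp
      tendsto_natCast_atTop_atTop).inv_tendsto_atTop.const_mul 2
  · have hsub : Tendsto (fun m : ℕ => m ^ 3 + 1) atTop atTop :=
      tendsto_atTop_mono (fun m => (Nat.le_self_pow (by norm_num) m).trans (m ^ 3).le_succ)
        tendsto_id
    have := ge_of_tendsto (h.comp hsub)
      ((eventually_ge_atTop 1).mono fun m hm => mean_cubeSqSeq_cube_add_one_ge hm)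
    norm_num at this
end

section
/- Let X be a real Banach space, 0 < p < ∞, and ∑_i x_i a series in X. If ∑_i x_i is weakly unconditionally Cauchy, then the space S_{w_p}(∑ x_i) = {(a_i) ∈ ℓ_∞ : the partial sums ∑_{i=1}^n a_i x_i form a strongly p-Cesàro summable sequence}, endowed with the supremum norm, is a complete (closed in ℓ_∞) normed space. -/
/-! Weak unconditional Cauchyness and the uniform boundedness principle, applied in the bidual,
bound the partial-sum operators `a ↦ ∑_{i<n} a i • x i` on `ℓ∞` uniformly in `n`. So nearby
coefficient sequences have uniformly close partial sums, and their strong Cesàro limits are close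
as well. Along a convergent sequence of coefficients these limits are therefore Cauchy in `X`, and
the limit of the limits is a strong Cesàro limit for the limiting coefficients, because strong
Cesàro convergence passes to uniform limits (using `(s + t) ^ p ≤ 2 ^ p * (s ^ p + t ^ p)`). -/

open Filter Finset BoundedContinuousFunction

/-- The `w_p`-summability space of a series, viewed inside `ℓ∞ = (ℕ →ᵇ ℝ)`. -/
def SwpSpace {X : Type*} [NormedAddCommGroup X] [NormedSpace ℝ X]
    (p : ℝ) (x : ℕ → X) : Set (ℕ →ᵇ ℝ) :=
  {a : ℕ →ᵇ ℝ | ∃ L : X, StrongCesaro p (fun n => ∑ i ∈ range n, a i • x i) L}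

open scoped NNReal Topology

lemma Real.add_rpow_le_two_rpow_mul_add_rpow {p a b : ℝ} (hp : 0 ≤ p) (ha : 0 ≤ a) (hb : 0 ≤ b) :
    (a + b) ^ p ≤ 2 ^ p * (a ^ p + b ^ p) := by
  wlog hab : a ≤ b generalizing a b
  · simpa only [add_comm] using this hb ha (le_of_not_ge hab)
  calc (a + b) ^ p ≤ (2 * b) ^ p := by gcongr; linarith
    _ = 2 ^ p * b ^ p := Real.mul_rpow zero_le_two hb
    _ ≤ 2 ^ p * (a ^ p + b ^ p) := by gcongr; linarith [Real.rpow_nonneg ha p]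

lemma inv_mul_sum_range_le_add_mul {u v : ℕ → ℝ} {c d : ℝ} (hc : 0 ≤ c)
    (huv : ∀ k, u k ≤ c + d * v k) (n : ℕ) :
    (n : ℝ)⁻¹ * ∑ k ∈ range n, u k ≤ c + d * ((n : ℝ)⁻¹ * ∑ k ∈ range n, v k) := by
  rcases n.eq_zero_or_pos with rfl | hn
  · simpa using hc
  calc (n : ℝ)⁻¹ * ∑ k ∈ range n, u k ≤ (n : ℝ)⁻¹ * ∑ k ∈ range n, (c + d * v k) := by
        gcongr with k; exact huv k
    _ = c + d * ((n : ℝ)⁻¹ * ∑ k ∈ range n, v k) := by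
        rw [sum_add_distrib, sum_const, card_range, nsmul_eq_mul, ← mul_sum]
        field_simp

lemma exists_lt_of_tendsto_inv_mul_sum_range {t : ℕ → ℝ}
    (ht : Tendsto (fun n : ℕ => (n : ℝ)⁻¹ * ∑ k ∈ range n, t k) atTop (𝓝 0))
    {ε : ℝ} (hε : 0 < ε) : ∃ k, t k < ε := by
  by_contra! hge
  have hmean : ∀ n : ℕ, 1 ≤ n → ε ≤ (n : ℝ)⁻¹ * ∑ k ∈ range n, t k := fun n hn => by
    have := card_nsmul_le_sum (range n) t ε fun k _ => hge k
    rw [card_range, nsmul_eq_mul] at this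
    rw [inv_mul_eq_div, le_div_iff₀ (by positivity)]
    linarith
  linarith [ge_of_tendsto ht (eventually_atTop.2 ⟨1, hmean⟩)]

section StrongCesaro

variable {X : Type*} [NormedAddCommGroup X] {p : ℝ} {y z : ℕ → X} {L M : X}

theorem StrongCesaro.norm_sub_le (hp : 0 < p) (hy : StrongCesaro p y L) (hz : StrongCesaro p z M)
    {δ : ℝ} (hyz : ∀ k, ‖y k - z k‖ ≤ δ) : ‖L - M‖ ≤ δ := by
  by_contra! hlt
  have hε : 0 < (‖L - M‖ - δ) / 2 := by linarith
  have hsum := hy.add hz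
  rw [add_zero] at hsum
  obtain ⟨k, hk⟩ := exists_lt_of_tendsto_inv_mul_sum_range
    (t := fun k => ‖y k - L‖ ^ p + ‖z k - M‖ ^ p)
    (hsum.congr fun n => by simp only [mul_add, sum_add_distrib]) (Real.rpow_pos_of_pos hε p)
  have hyk : ‖y k - L‖ < (‖L - M‖ - δ) / 2 := by
    refine (Real.rpow_lt_rpow_iff (norm_nonneg _) hε.le hp).1 ?_
    linarith [Real.rpow_nonneg (norm_nonneg (z k - M)) p]
  have hzk : ‖z k - M‖ < (‖L - M‖ - δ) / 2 := by
    refine (Real.rpow_lt_rpow_iff (norm_nonneg _) hε.le hp).1 ?_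
    linarith [Real.rpow_nonneg (norm_nonneg (y k - L)) p]
  have hLM := norm_sub_le_norm_sub_add_norm_sub L (y k) M
  have hyM := norm_sub_le_norm_sub_add_norm_sub (y k) (z k) M
  linarith [norm_sub_rev L (y k), hyz k]

theorem StrongCesaro.of_tendstoUniformly {ι : Type*} {l : Filter ι} [l.NeBot] {z : ι → ℕ → X}
    {M : ι → X} (hp : 0 < p) (hz : ∀ i, StrongCesaro p (z i) (M i))
    (hzy : TendstoUniformly z y l) (hM : Tendsto M l (𝓝 L)) : StrongCesaro p y L := by
  refine tendsto_order.2 ⟨fun a ha => .of_forall fun n => ha.trans_le (by positivity), fun ε hε => ?_⟩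
  obtain ⟨η, hηε, hη⟩ : ∃ η, 2 ^ p * (2 * η) ^ p < ε / 2 ∧ 0 < η := by
    have hcont : Continuous fun η : ℝ => 2 ^ p * (2 * η) ^ p :=
      continuous_const.mul ((continuous_const_mul 2).rpow_const fun _ => Or.inr hp.le)
    have h0 : Tendsto (fun η : ℝ => 2 ^ p * (2 * η) ^ p) (𝓝[>] 0) (𝓝 0) := by
      simpa [Real.zero_rpow hp.ne'] using (hcont.tendsto 0).mono_left nhdsWithin_le_nhds
    exact ((h0.eventually (gt_mem_nhds (half_pos hε))).and self_mem_nhdsWithin).exists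
  obtain ⟨i, hzi, hMi⟩ :=
    ((Metric.tendstoUniformly_iff.1 hzy η hη).and (Metric.tendsto_nhds.1 hM η hη)).exists
  have hpt : ∀ k, ‖y k - L‖ ^ p ≤ 2 ^ p * (2 * η) ^ p + 2 ^ p * ‖z i k - M i‖ ^ p := fun k => by
    have hdist : ‖y k - L‖ ≤ ‖z i k - M i‖ + 2 * η := by
      have h₁ := hzi k
      rw [dist_eq_norm] at h₁ hMi
      calc ‖y k - L‖ = ‖(y k - z i k) + (z i k - M i) + (M i - L)‖ := by abel_nf
        _ ≤ ‖y k - z i k‖ + ‖z i k - M i‖ + ‖M i - L‖ := norm_add₃_le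
        _ ≤ ‖z i k - M i‖ + 2 * η := by linarith
    calc ‖y k - L‖ ^ p ≤ (‖z i k - M i‖ + 2 * η) ^ p := by gcongr
      _ ≤ 2 ^ p * (‖z i k - M i‖ ^ p + (2 * η) ^ p) :=
        Real.add_rpow_le_two_rpow_mul_add_rpow hp.le (norm_nonneg _) (by positivity)
      _ = 2 ^ p * (2 * η) ^ p + 2 ^ p * ‖z i k - M i‖ ^ p := by ring
  filter_upwards [(hz i).eventually (gt_mem_nhds (by positivity : 0 < ε / 2 / 2 ^ p))] with n hn
  calc (n : ℝ)⁻¹ * ∑ k ∈ range n, ‖y k - L‖ ^ p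
      ≤ 2 ^ p * (2 * η) ^ p + 2 ^ p * ((n : ℝ)⁻¹ * ∑ k ∈ range n, ‖z i k - M i‖ ^ p) :=
        inv_mul_sum_range_le_add_mul (by positivity) hpt n
    _ < ε / 2 + 2 ^ p * (ε / 2 / 2 ^ p) := by gcongr
    _ = ε := by field_simp; ring

theorem isClosed_setOf_exists_strongCesaro {E : Type*} [PseudoMetricSpace E] [CompleteSpace X]
    (hp : 0 < p) {K : ℝ≥0} {F : E → ℕ → X} (hF : ∀ k, LipschitzWith K fun a => F a k) :
    IsClosed {a | ∃ L, StrongCesaro p (F a) L} := by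
  refine IsSeqClosed.isClosed fun a A ha hA => ?_
  choose L hL using ha
  have hLdist : ∀ m m', dist (L m) (L m') ≤ K * dist (a m) (a m') := fun m m' => by
    rw [dist_eq_norm]
    exact (hL m).norm_sub_le hp (hL m') fun k => by
      simpa only [← dist_eq_norm] using (hF k).dist_le_mul (a m) (a m')
  have hK : ∀ {d ε : ℝ}, 0 ≤ d → d < ε / (K + 1) → K * d < ε := fun {d ε} hd₀ hd => by
    rw [lt_div_iff₀ (by positivity)] at hd
    linarith
  have hLcauchy : CauchySeq L := by
    refine Metric.cauchySeq_iff.2 fun ε hε => ?_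
    obtain ⟨N, hN⟩ := Metric.cauchySeq_iff.1 hA.cauchySeq (ε / (K + 1)) (by positivity)
    exact ⟨N, fun m hm m' hm' => (hLdist m m').trans_lt (hK dist_nonneg (hN m hm m' hm'))⟩
  obtain ⟨L₀, hL₀⟩ := cauchySeq_tendsto_of_complete hLcauchy
  refine ⟨L₀, StrongCesaro.of_tendstoUniformly hp hL ?_ hL₀⟩
  refine Metric.tendstoUniformly_iff.2 fun ε hε => ?_
  filter_upwards [Metric.tendsto_nhds.1 hA (ε / (K + 1)) (by positivity)] with m hm k
  exact ((hF k).dist_le_mul A (a m)).trans_lt (hK dist_nonneg (by rwa [dist_comm]))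

end StrongCesaro

section PartialSumOperators

variable {X : Type*} [NormedAddCommGroup X] [NormedSpace ℝ X]

noncomputable def partialSumCLM (x : ℕ → X) (n : ℕ) : (ℕ →ᵇ ℝ) →L[ℝ] X :=
  ∑ i ∈ range n, (evalCLM ℝ i).smulRight (x i)

@[simp]
theorem partialSumCLM_apply (x : ℕ → X) (n : ℕ) (a : ℕ →ᵇ ℝ) :
    partialSumCLM x n a = ∑ i ∈ range n, a i • x i := by
  simp [partialSumCLM]

theorem exists_nnnorm_partialSumCLM_le {x : ℕ → X}
    (hwuc : ∀ f : X →L[ℝ] ℝ, Summable fun i => |f (x i)|) :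
    ∃ C : ℝ≥0, ∀ n, ‖partialSumCLM x n‖₊ ≤ C := by
  let g : ℕ × Metric.closedBall (0 : ℕ →ᵇ ℝ) 1 → StrongDual ℝ (StrongDual ℝ X) :=
    fun q => NormedSpace.inclusionInDoubleDual ℝ X (partialSumCLM x q.1 q.2)
  have hg : ∀ f, ∃ C, ∀ q, ‖g q f‖ ≤ C := by
    refine fun f => ⟨∑' i, |f (x i)|, fun ⟨n, b, hb⟩ => ?_⟩
    rw [mem_closedBall_zero_iff] at hb
    calc ‖g (n, ⟨b, _⟩) f‖ = |∑ i ∈ range n, b i * f (x i)| := by simp [g]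
      _ ≤ ∑ i ∈ range n, |f (x i)| := by
          refine (abs_sum_le_sum_abs _ _).trans (sum_le_sum fun i _ => ?_)
          rw [abs_mul]
          exact mul_le_of_le_one_left (abs_nonneg _) ((b.norm_coe_le_norm i).trans hb)
      _ ≤ ∑' i, |f (x i)| := (hwuc f).sum_le_tsum _ fun i _ => abs_nonneg _
  obtain ⟨C, hC⟩ := banach_steinhaus hg
  refine ⟨C.toNNReal, fun n => ?_⟩
  rw [← NNReal.coe_le_coe, coe_nnnorm, Real.coe_toNNReal']
  refine ContinuousLinearMap.opNorm_le_of_unit_norm (le_max_right _ _) fun b hb => ?_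
  calc ‖partialSumCLM x n b‖ = ‖g (n, ⟨b, by simp [hb]⟩)‖ :=
        ((NormedSpace.inclusionInDoubleDualLi ℝ).norm_map _).symm
    _ ≤ max C 0 := (hC _).trans (le_max_left _ _)

end PartialSumOperators

theorem statement9 {X : Type*} [NormedAddCommGroup X] [NormedSpace ℝ X] [CompleteSpace X]
    (p : ℝ) (hp : 0 < p) (x : ℕ → X)
    (hwuc : ∀ f : X →L[ℝ] ℝ, Summable fun i => |f (x i)|) :
    IsComplete (SwpSpace p x) := by
  obtain ⟨C, hC⟩ := exists_nnnorm_partialSumCLM_le hwuc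
  have hlip : ∀ n, LipschitzWith C fun a : ℕ →ᵇ ℝ => ∑ i ∈ range n, a i • x i := fun n =>
    funext (partialSumCLM_apply x n) ▸ (partialSumCLM x n).lipschitz.weaken (hC n)
  exact (isClosed_setOf_exists_strongCesaro hp hlip).isComplete
end

section
/- Let X be a real Banach space, 0 < p < ∞, and ∑_i x_i a series in X. If c_0 ⊆ S_{w_p}(∑ x_i), i.e., for every null sequence (a_i) the partial sums ∑_{i=1}^n a_i x_i are strongly p-Cesàro summable, then ∑_i x_i is weakly unconditionally Cauchy. -/
open Filter Finset

/-!
If `∑ |f (x i)|` diverges for some functional `f`, there is a null sequence `c` with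
`∑ c i * |f (x i)| = ∞` (take `c i = 1 / √(S (i + 1))` for the partial sums `S`: the terms dominate
the telescoping increments of `√S`). With `a i = c i * sign (f (x i))`, `f` tends to infinity along the
partial sums `s n` of `∑ a i • x i`, so `‖s n - L‖ → ∞` for every `L`, and then the Cesàro means
of `‖s n - L‖ ^ p` cannot tend to `0`.
-/

open Topology

lemma Real.sqrt_sub_sqrt_le_div {a b : ℝ} (ha : 0 ≤ a) (hab : a ≤ b) :
    √b - √a ≤ (b - a) / √b := by
  rcases (Real.sqrt_nonneg b).eq_or_lt with hb | hb
  · rw [← hb, div_zero]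
    linarith [Real.sqrt_nonneg a]
  rw [le_div_iff₀ hb, sub_mul, Real.mul_self_sqrt (ha.trans hab)]
  have := mul_le_mul_of_nonneg_left (Real.sqrt_le_sqrt hab) (Real.sqrt_nonneg a)
  rw [Real.mul_self_sqrt ha] at this
  linarith

lemma exists_tendsto_zero_tendsto_sum_mul_atTop {b : ℕ → ℝ} (hb : ∀ i, 0 ≤ b i)
    (hs : ¬ Summable b) :
    ∃ c : ℕ → ℝ, Tendsto c atTop (𝓝 0) ∧
      Tendsto (fun n => ∑ i ∈ range n, c i * b i) atTop atTop := by
  set S : ℕ → ℝ := fun n => ∑ i ∈ range n, b i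
  have hS : Tendsto S atTop atTop := (not_summable_iff_tendsto_nat_atTop_of_nonneg hb).1 hs
  have hS_nonneg (n : ℕ) : 0 ≤ S n := sum_nonneg fun i _ => hb i
  refine ⟨fun i => (√(S (i + 1)))⁻¹,
    (Real.tendsto_sqrt_atTop.comp (hS.comp (tendsto_add_atTop_nat 1))).inv_tendsto_atTop,
    tendsto_atTop_mono (fun n => ?_) (Real.tendsto_sqrt_atTop.comp hS)⟩
  calc √(S n) = ∑ i ∈ range n, (√(S (i + 1)) - √(S i)) := by
        simp [sum_range_sub (fun i => √(S i)), S]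
    _ ≤ ∑ i ∈ range n, (√(S (i + 1)))⁻¹ * b i := by
        gcongr with i
        have hstep : S (i + 1) = S i + b i := sum_range_succ b i
        rw [inv_mul_eq_div, show b i = S (i + 1) - S i by rw [hstep]; ring]
        exact Real.sqrt_sub_sqrt_le_div (hS_nonneg i) (by linarith [hb i])

lemma not_tendsto_cesaro_zero_of_tendsto_atTop {u : ℕ → ℝ} (hu : Tendsto u atTop atTop) :
    ¬ Tendsto (fun n : ℕ => (n : ℝ)⁻¹ * ∑ k ∈ range n, u k) atTop (𝓝 0) := by
  intro h
  -- `min (u n) 1` is eventually `1`, so its Cesàro means tend to `1`.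
  have hmin : Tendsto (fun n => min (u n) 1) atTop (𝓝 1) :=
    tendsto_const_nhds.congr' ((hu.eventually_ge_atTop 1).mono fun n hn => (min_eq_right hn).symm)
  have hle : (1 : ℝ) ≤ 0 := le_of_tendsto_of_tendsto' hmin.cesaro h fun n => by
    gcongr with k
    exact min_le_left _ _
  norm_num at hle

lemma ContinuousLinearMap.tendsto_norm_sub_atTop {α X : Type*} [SeminormedAddCommGroup X]
    [NormedSpace ℝ X] (f : X →L[ℝ] ℝ) {l : Filter α} {y : α → X}
    (hy : Tendsto (fun n => f (y n)) l atTop) (L : X) :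
    Tendsto (fun n => ‖y n - L‖) l atTop := by
  refine Tendsto.atTop_of_const_mul₀ (by positivity : (0 : ℝ) < ‖f‖ + 1)
    (tendsto_atTop_mono (fun n => ?_) (tendsto_atTop_add_const_right l (-f L) hy))
  calc f (y n) + -f L ≤ ‖f (y n - L)‖ := by simpa [sub_eq_add_neg] using le_abs_self (f (y n - L))
    _ ≤ ‖f‖ * ‖y n - L‖ := f.le_opNorm _
    _ ≤ (‖f‖ + 1) * ‖y n - L‖ := by gcongr; linarith

lemma StrongCesaro.not_of_tendsto_norm_sub_atTop {X : Type*} [NormedAddCommGroup X] {p : ℝ}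
    (hp : 0 < p) {y : ℕ → X} {L : X} (hy : Tendsto (fun n => ‖y n - L‖) atTop atTop) :
    ¬ StrongCesaro p y L :=
  not_tendsto_cesaro_zero_of_tendsto_atTop ((tendsto_rpow_atTop hp).comp hy)

theorem statement10_general {X : Type*} [NormedAddCommGroup X] [NormedSpace ℝ X]
    (p : ℝ) (hp : 0 < p) (x : ℕ → X)
    (hc0 : ∀ a : ℕ → ℝ, Tendsto a atTop (nhds 0) →
      ∃ L : X, StrongCesaro p (fun n => ∑ i ∈ range n, a i • x i) L) :
    ∀ f : X →L[ℝ] ℝ, Summable fun i => |f (x i)| := by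
  intro f
  by_contra hns
  obtain ⟨c, hc, hsum⟩ := exists_tendsto_zero_tendsto_sum_mul_atTop (fun i => abs_nonneg _) hns
  set a : ℕ → ℝ := fun i => c i * SignType.sign (f (x i))
  have ha : Tendsto a atTop (𝓝 0) := by
    refine squeeze_zero_norm (fun i => ?_) (tendsto_norm_zero.comp hc)
    rw [norm_mul]
    refine mul_le_of_le_one_right (norm_nonneg _) ?_
    rcases lt_trichotomy (f (x i)) 0 with h | h | h <;> simp [h]
  have hfa (n : ℕ) : f (∑ i ∈ range n, a i • x i) = ∑ i ∈ range n, c i * |f (x i)| := by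
    simp [a, map_sum, mul_assoc]
  obtain ⟨L, hL⟩ := hc0 a ha
  refine StrongCesaro.not_of_tendsto_norm_sub_atTop hp (f.tendsto_norm_sub_atTop ?_ L) hL
  simpa only [hfa] using hsum

theorem statement10 {X : Type*} [NormedAddCommGroup X] [NormedSpace ℝ X] [CompleteSpace X]
    (p : ℝ) (hp : 0 < p) (x : ℕ → X)
    (hc0 : ∀ a : ℕ → ℝ, Tendsto a atTop (nhds 0) →
      ∃ L : X, StrongCesaro p (fun n => ∑ i ∈ range n, a i • x i) L) :
    ∀ f : X →L[ℝ] ℝ, Summable fun i => |f (x i)| :=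
  statement10_general p hp x hc0
end

section
/- Let X be a real normed space that is not complete. Then there exists a weakly unconditionally Cauchy series ∑_n y_n in X (with ‖y_n‖ < 2^{-n}) such that the sequence of partial sums S_N = ∑_{n=1}^N (1/n) y_n is not strongly p-Cesàro summable to any element of X, for any p ≥ 1. -/
/-!
Take a Cauchy sequence `u` in `X` without a limit and a subsequence `u ∘ φ` whose increments
`x n = u (φ (n + 1)) - u (φ n)` satisfy `‖x n‖ < 2⁻¹ ^ (n + 1) / (n + 1)`, and put
`y n = (n + 1) • x n`. Then `∑ ‖y n‖ < ∞`, so `∑ |f (y n)| < ∞` for every functional `f`, while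
the partial sums of `(n + 1)⁻¹ • y n` telescope to `u (φ N) - u (φ 0)`: a Cauchy sequence with
no limit. For such a sequence `‖S k - L‖` converges to some `c > 0`, so its `p`-th powers have
Cesàro means tending to `c ^ p ≠ 0`.
-/

open Filter Finset

open Topology

theorem exists_cauchySeq_forall_not_tendsto {α : Type*} [PseudoMetricSpace α]
    (h : ¬ CompleteSpace α) :
    ∃ u : ℕ → α, CauchySeq u ∧ ∀ a, ¬ Tendsto u atTop (𝓝 a) := by
  by_contra! hlim
  exact h (Metric.complete_of_cauchySeq_tendsto hlim)

theorem CauchySeq.exists_strictMono_dist_lt {α : Type*} [PseudoMetricSpace α] {u : ℕ → α}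
    (hu : CauchySeq u) {ε : ℕ → ℝ} (hε : ∀ n, 0 < ε n) :
    ∃ φ : ℕ → ℕ, StrictMono φ ∧ ∀ n, dist (u (φ (n + 1))) (u (φ n)) < ε n :=
  hu.subseq_mem fun n => Metric.dist_mem_uniformity (hε n)

theorem ContinuousLinearMap.summable_norm_apply {𝕜 E F : Type*} [NontriviallyNormedField 𝕜]
    [SeminormedAddCommGroup E] [NormedSpace 𝕜 E] [SeminormedAddCommGroup F] [NormedSpace 𝕜 F]
    (f : E →L[𝕜] F) {y : ℕ → E} (hy : Summable fun n => ‖y n‖) :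
    Summable fun n => ‖f (y n)‖ :=
  (hy.mul_left ‖f‖).of_nonneg_of_le (fun _ => norm_nonneg _) fun n => f.le_opNorm (y n)

theorem not_strongCesaro_of_cauchySeq {X : Type*} [NormedAddCommGroup X] {S : ℕ → X} {L : X}
    (hS : CauchySeq S) (hL : ¬ Tendsto S atTop (𝓝 L)) (p : ℝ) : ¬ StrongCesaro p S L := by
  intro hces
  have hdist : CauchySeq fun k => ‖S k - L‖ :=
    (uniformContinuous_norm.comp (uniformContinuous_id.sub uniformContinuous_const)).comp_cauchySeq
      hS
  obtain ⟨c, hc⟩ := cauchySeq_tendsto_of_complete hdist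
  have hc_nonneg : 0 ≤ c := ge_of_tendsto' hc fun k => norm_nonneg _
  have hc_ne : c ≠ 0 := by
    rintro rfl
    exact hL (tendsto_iff_norm_sub_tendsto_zero.mpr hc)
  have hmeans : Tendsto (fun n : ℕ => (n : ℝ)⁻¹ * ∑ k ∈ range n, ‖S k - L‖ ^ p) atTop
      (𝓝 (c ^ p)) := (hc.rpow_const (Or.inl hc_ne)).cesaro
  exact (Real.rpow_pos_of_pos (hc_nonneg.lt_of_ne' hc_ne) p).ne'
    (tendsto_nhds_unique hmeans hces)

theorem statement13 {X : Type*} [NormedAddCommGroup X] [NormedSpace ℝ X]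
    (hX : ¬ CompleteSpace X) :
    ∃ y : ℕ → X,
      (∀ n : ℕ, ‖y n‖ < (2 : ℝ)⁻¹ ^ (n + 1)) ∧
      (∀ f : X →L[ℝ] ℝ, Summable fun n => |f (y n)|) ∧
      ∀ p : ℝ, 1 ≤ p → ∀ L : X,
        ¬ StrongCesaro p (fun N => ∑ n ∈ range N, ((n : ℝ) + 1)⁻¹ • y n) L := by
  obtain ⟨u, hu, hlim⟩ := exists_cauchySeq_forall_not_tendsto hX
  have hpos (n : ℕ) : (0 : ℝ) < n + 1 := n.cast_add_one_pos
  obtain ⟨φ, hφ, hdist⟩ := hu.exists_strictMono_dist_lt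
    (ε := fun n => (2 : ℝ)⁻¹ ^ (n + 1) / (n + 1)) fun n => by positivity
  set y : ℕ → X := fun n => ((n : ℝ) + 1) • (u (φ (n + 1)) - u (φ n))
  have hy_norm (n : ℕ) : ‖y n‖ < (2 : ℝ)⁻¹ ^ (n + 1) := by
    rw [norm_smul, Real.norm_of_nonneg (hpos n).le, ← dist_eq_norm, ← lt_div_iff₀' (hpos n)]
    exact hdist n
  have hpartial :
      (fun N => ∑ n ∈ range N, ((n : ℝ) + 1)⁻¹ • y n) = fun N => u (φ N) - u (φ 0) := by
    funext N
    simp only [y, smul_smul, inv_mul_cancel₀ (hpos _).ne', one_smul]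
    exact sum_range_sub (u ∘ φ) N
  have hS_cauchy : CauchySeq fun N => u (φ N) - u (φ 0) :=
    (uniformContinuous_id.sub uniformContinuous_const).comp_cauchySeq
      (hu.comp_tendsto hφ.tendsto_atTop)
  have hS_lim (L : X) : ¬ Tendsto (fun N => u (φ N) - u (φ 0)) atTop (𝓝 L) := fun h =>
    hlim _ (tendsto_nhds_of_cauchySeq_of_subseq hu hφ.tendsto_atTop
      (by simpa [Function.comp_def] using h.add_const (u (φ 0))))
  have hy_summable : Summable fun n => ‖y n‖ :=
    ((summable_geometric_of_lt_one (by norm_num) (by norm_num)).comp_injective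
      (add_left_injective 1)).of_nonneg_of_le (fun _ => norm_nonneg _) fun n => (hy_norm n).le
  refine ⟨y, hy_norm, fun f => ?_, fun p _ L => ?_⟩
  · simpa only [Real.norm_eq_abs] using f.summable_norm_apply hy_summable
  · exact hpartial ▸ not_strongCesaro_of_cauchySeq hS_cauchy (hS_lim L) p
end

section
/- Let X be a real normed space, 0 < p < ∞, and ∑_i f_i a weakly unconditionally Cauchy series in the dual space X*. Then for every bounded real sequence (a_i) ∈ ℓ_∞, the partial sums ∑_{i=1}^n a_i f_i are weak* strongly p-Cesàro summable to some f ∈ X*; that is, S_{w*-w_p}(∑ f_i) = ℓ_∞. -/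
/-!
Since `∑ |φ (f i)| < ∞` for every `φ ∈ X**`, in particular for evaluation at `v ∈ X`, the series
`∑ a i * f i v` converges for every bounded `a`, so the partial sums `S k = ∑_{i<k} a i • f i`
converge weak* to the pointwise limit `g`. The partial sums are weakly bounded in `X*`, hence
norm bounded by the uniform boundedness principle on the Banach space `X**`, so `g` is continuous.
Finally, convergence implies strong Cesàro convergence for every exponent `p > 0`.
-/

open Filter Finset Topology Bornology

theorem isBounded_range_of_forall_bounded_dual {𝕜 E ι : Type*} [RCLike 𝕜]
    [SeminormedAddCommGroup E] [NormedSpace 𝕜 E] {x : ι → E}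
    (h : ∀ φ : StrongDual 𝕜 E, ∃ M, ∀ i, ‖φ (x i)‖ ≤ M) :
    IsBounded (Set.range x) := by
  obtain ⟨M, hM⟩ :=
    banach_steinhaus (g := fun i => NormedSpace.inclusionInDoubleDual 𝕜 E (x i)) h
  refine isBounded_iff_forall_norm_le.2 ⟨M, ?_⟩
  rintro _ ⟨i, rfl⟩
  rw [← (NormedSpace.inclusionInDoubleDualLi (E := E) 𝕜).norm_map]
  exact hM i

theorem summable_mul_of_abs_le {a y : ℕ → ℝ} {C : ℝ} (ha : ∀ i, |a i| ≤ C)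
    (hy : Summable fun i => |y i|) : Summable fun i => a i * y i :=
  Summable.of_norm_bounded (hy.mul_left C) fun i => by
    rw [Real.norm_eq_abs, abs_mul]
    exact mul_le_mul_of_nonneg_right (ha i) (abs_nonneg _)

theorem abs_sum_mul_le_tsum {a y : ℕ → ℝ} {C : ℝ} (ha : ∀ i, |a i| ≤ C)
    (hy : Summable fun i => |y i|) (s : Finset ℕ) :
    |∑ i ∈ s, a i * y i| ≤ ∑' i, C * |y i| :=
  calc |∑ i ∈ s, a i * y i| ≤ ∑ i ∈ s, C * |y i| :=
        (abs_sum_le_sum_abs _ _).trans <| sum_le_sum fun i _ => by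
          rw [abs_mul]
          exact mul_le_mul_of_nonneg_right (ha i) (abs_nonneg _)
    _ ≤ ∑' i, C * |y i| :=
        (hy.mul_left C).sum_le_tsum s fun i _ =>
          mul_nonneg ((abs_nonneg _).trans (ha 0)) (abs_nonneg _)

theorem exists_tendsto_sum_smul_apply {X : Type*} [NormedAddCommGroup X] [NormedSpace ℝ X]
    {f : ℕ → StrongDual ℝ X}
    (hwuc : ∀ φ : StrongDual ℝ (StrongDual ℝ X), Summable fun i => |φ (f i)|)
    {a : ℕ → ℝ} {C : ℝ} (ha : ∀ i, |a i| ≤ C) :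
    ∃ g : StrongDual ℝ X, ∀ v, Tendsto (fun k => (∑ i ∈ range k, a i • f i) v) atTop (𝓝 (g v)) := by
  set S : ℕ → StrongDual ℝ X := fun k => ∑ i ∈ range k, a i • f i
  have hS : ∀ k (φ : StrongDual ℝ (StrongDual ℝ X)), φ (S k) = ∑ i ∈ range k, a i * φ (f i) := by
    simp [S]
  have hsummable (v : X) : Summable fun i => a i * f i v :=
    summable_mul_of_abs_le ha (hwuc (NormedSpace.inclusionInDoubleDual ℝ X v))
  have hconv : Tendsto (fun k v => S k v) atTop (𝓝 fun v => ∑' i, a i * f i v) :=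
    tendsto_pi_nhds.2 fun v => by
      simpa [S] using (hsummable v).hasSum.tendsto_sum_nat
  have hbdd : IsBounded (Set.range S) :=
    isBounded_range_of_forall_bounded_dual fun φ =>
      ⟨_, fun k => by rw [hS, Real.norm_eq_abs]; exact abs_sum_mul_le_tsum ha (hwuc φ) _⟩
  exact ⟨.ofTendstoOfBoundedRange _ S hconv hbdd, tendsto_pi_nhds.1 hconv⟩

theorem tendsto_cesaro_abs_sub_rpow {u : ℕ → ℝ} {l p : ℝ} (hu : Tendsto u atTop (𝓝 l))
    (hp : 0 < p) :
    Tendsto (fun n : ℕ => (n : ℝ)⁻¹ * ∑ k ∈ range n, |u k - l| ^ p) atTop (𝓝 0) := by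
  have h : Tendsto (fun k => |u k - l| ^ p) atTop (𝓝 0) := by
    simpa [Real.zero_rpow hp.ne'] using
      ((hu.sub_const l).abs.rpow_const (p := p) (Or.inr hp.le))
  simpa using h.cesaro

theorem statement16 {X : Type*} [NormedAddCommGroup X] [NormedSpace ℝ X]
    (p : ℝ) (hp : 0 < p) (f : ℕ → X →L[ℝ] ℝ)
    (hwuc : ∀ φ : (X →L[ℝ] ℝ) →L[ℝ] ℝ, Summable fun i => |φ (f i)|) :
    ∀ a : ℕ → ℝ, (∃ C : ℝ, ∀ i, |a i| ≤ C) →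
      ∃ g : X →L[ℝ] ℝ, ∀ v : X,
        Tendsto (fun n : ℕ =>
            (n : ℝ)⁻¹ * ∑ k ∈ range n, |(∑ i ∈ range k, a i • f i) v - g v| ^ p)
          atTop (nhds 0) := by
  rintro a ⟨C, ha⟩
  obtain ⟨g, hg⟩ := exists_tendsto_sum_smul_apply hwuc ha
  exact ⟨g, fun v => tendsto_cesaro_abs_sub_rpow (hg v) hp⟩
end

section
/- Let X be a barrelled normed space, 0 < p < ∞, and ∑_i f_i a series in X*. Suppose that for every x ∈ X and every M ⊆ ℕ, the sequence of partial sums of ∑_{i∈M} f_i(x) is strongly p-Cesàro summable to some real number. Then ∑_i f_i is weakly unconditionally Cauchy. -/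
/-!
For a fixed `x`, take `M = {i | f i x ≥ 0}`: the partial sums of `∑_{i ∈ M} f i x` are monotone and
those over the complement antitone. A strongly Cesàro summable sequence comes within `1` of its
limit infinitely often, so these monotone (antitone) partial sums are bounded, and `∑ |f i x| < ∞`.
Hence the set `E` of partial sums with coefficients in `[-1, 1]` is pointwise bounded, so norm
bounded by barrelledness, and choosing the coefficients `sign (φ (f i))` bounds `∑ |φ (f i)|`.
-/

open Filter Finset

namespace StrongCesaro

variable {p : ℝ}

theorem frequently_norm_sub_lt {X : Type*} [NormedAddCommGroup X] {x : ℕ → X} {L : X}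
    (hp : 0 ≤ p) (h : StrongCesaro p x L) : ∃ᶠ k in atTop, ‖x k - L‖ < 1 := by
  by_contra hfreq
  have hfar : ∀ᶠ k in atTop, 1 ≤ ‖x k - L‖ := by
    simpa only [not_frequently, not_lt] using hfreq
  -- The truncations `min 1 ‖x k - L‖ ^ p` are eventually `1`, so their Cesàro means tend to `1`.
  have htrunc : Tendsto (fun k => min 1 (‖x k - L‖ ^ p)) atTop (nhds 1) :=
    tendsto_const_nhds.congr' <| hfar.mono fun k hk =>
      (min_eq_left (Real.one_le_rpow hk hp)).symm
  have hle : ∀ n : ℕ, (n : ℝ)⁻¹ * ∑ k ∈ range n, min 1 (‖x k - L‖ ^ p) ≤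
      (n : ℝ)⁻¹ * ∑ k ∈ range n, ‖x k - L‖ ^ p := fun n => by
    gcongr with k
    exact min_le_right _ _
  have : (1 : ℝ) ≤ 0 := le_of_tendsto_of_tendsto' htrunc.cesaro h hle
  norm_num at this

variable {S : ℕ → ℝ} {L : ℝ}

theorem le_add_one_of_monotone (hp : 0 ≤ p) (h : StrongCesaro p S L) (hS : Monotone S)
    (n : ℕ) : S n ≤ L + 1 := by
  obtain ⟨k, hnk, hk⟩ := (h.frequently_norm_sub_lt hp).forall_exists_of_atTop n
  rw [Real.norm_eq_abs, abs_sub_lt_iff] at hk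
  linarith [hS hnk]

theorem sub_one_le_of_antitone (hp : 0 ≤ p) (h : StrongCesaro p S L) (hS : Antitone S)
    (n : ℕ) : L - 1 ≤ S n := by
  obtain ⟨k, hnk, hk⟩ := (h.frequently_norm_sub_lt hp).forall_exists_of_atTop n
  rw [Real.norm_eq_abs, abs_sub_lt_iff] at hk
  linarith [hS hnk]

end StrongCesaro

open Classical in
theorem summable_abs_of_forall_strongCesaro {p : ℝ} (hp : 0 ≤ p) {a : ℕ → ℝ}
    (h : ∀ M : Set ℕ, ∃ L : ℝ,
      StrongCesaro p (fun n => ∑ i ∈ (range n).filter (fun i => i ∈ M), a i) L) :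
    Summable fun i => |a i| := by
  simp only [sum_filter, ← Set.indicator_apply] at h
  set M : Set ℕ := {i | 0 ≤ a i}
  obtain ⟨L₁, h₁⟩ := h M
  obtain ⟨L₂, h₂⟩ := h Mᶜ
  have hmono : Monotone fun n => ∑ i ∈ range n, M.indicator a i :=
    monotone_nat_of_le_succ fun n => by
      rw [sum_range_succ, le_add_iff_nonneg_right]
      exact Set.indicator_nonneg (fun i hi => hi) n
  have hanti : Antitone fun n => ∑ i ∈ range n, Mᶜ.indicator a i :=
    antitone_nat_of_succ_le fun n => by
      rw [sum_range_succ, add_le_iff_nonpos_right]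
      exact Set.indicator_nonpos (fun i hi => (not_le.1 hi).le) n
  refine summable_of_sum_range_le (c := L₁ + 1 - (L₂ - 1)) (fun _ => abs_nonneg _) fun n => ?_
  have hsplit : ∑ i ∈ range n, |a i| =
      ∑ i ∈ range n, M.indicator a i - ∑ i ∈ range n, Mᶜ.indicator a i := by
    rw [← sum_sub_distrib]
    refine sum_congr rfl fun i _ => ?_
    by_cases hi : 0 ≤ a i
    · simp [M, hi, abs_of_nonneg hi]
    · simp [M, hi, abs_of_neg (not_le.1 hi)]
  rw [hsplit]
  linarith [h₁.le_add_one_of_monotone hp hmono n, h₂.sub_one_le_of_antitone hp hanti n]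

/-- The set `E` in the characterisation of weakly unconditionally Cauchy series. -/
def unitCoeffSums {E : Type*} [AddCommGroup E] [Module ℝ E] (f : ℕ → E) : Set E :=
  {x | ∃ (n : ℕ) (c : ℕ → ℝ), (∀ i, |c i| ≤ 1) ∧ x = ∑ i ∈ range n, c i • f i}

section unitCoeffSums

variable {E : Type*} [NormedAddCommGroup E] [NormedSpace ℝ E] {f : ℕ → E}

theorem abs_apply_le_tsum_of_mem_unitCoeffSums (φ : E →L[ℝ] ℝ)
    (hφ : Summable fun i => |φ (f i)|) {x : E} (hx : x ∈ unitCoeffSums f) :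
    |φ x| ≤ ∑' i, |φ (f i)| := by
  obtain ⟨n, c, hc, rfl⟩ := hx
  rw [map_sum]
  calc |∑ i ∈ range n, φ (c i • f i)| ≤ ∑ i ∈ range n, |φ (c i • f i)| := abs_sum_le_sum_abs _ _
    _ ≤ ∑ i ∈ range n, |φ (f i)| := sum_le_sum fun i _ => by
        rw [map_smul, smul_eq_mul, abs_mul]
        exact mul_le_of_le_one_left (abs_nonneg _) (hc i)
    _ ≤ ∑' i, |φ (f i)| := hφ.sum_le_tsum _ fun i _ => abs_nonneg _

theorem exists_mem_unitCoeffSums_apply_eq (φ : E →L[ℝ] ℝ) (n : ℕ) :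
    ∃ x ∈ unitCoeffSums f, φ x = ∑ i ∈ range n, |φ (f i)| := by
  refine ⟨∑ i ∈ range n, (SignType.sign (φ (f i)) : ℝ) • f i,
    ⟨n, _, fun i => ?_, rfl⟩, ?_⟩
  · rcases SignType.sign (φ (f i)) with _ | _ | _ <;> simp
  · simp only [map_sum, map_smul, smul_eq_mul, sign_mul_self]

theorem summable_abs_apply_of_forall_mem_unitCoeffSums_norm_le {C : ℝ}
    (hC : ∀ x ∈ unitCoeffSums f, ‖x‖ ≤ C) (φ : E →L[ℝ] ℝ) :
    Summable fun i => |φ (f i)| := by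
  refine summable_of_sum_range_le (c := ‖φ‖ * C) (fun _ => abs_nonneg _) fun n => ?_
  obtain ⟨x, hx, hφx⟩ := exists_mem_unitCoeffSums_apply_eq (f := f) φ n
  rw [← hφx]
  exact (le_abs_self _).trans (φ.le_opNorm_of_le (hC x hx))

end unitCoeffSums

open Classical in
theorem statement17 {X : Type*} [NormedAddCommGroup X] [NormedSpace ℝ X]
    (hbarrelled : ∀ s : Set (X →L[ℝ] ℝ),
      (∀ v : X, ∃ C : ℝ, ∀ g ∈ s, |g v| ≤ C) → ∃ C : ℝ, ∀ g ∈ s, ‖g‖ ≤ C)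
    (p : ℝ) (hp : 0 < p) (f : ℕ → X →L[ℝ] ℝ)
    (h : ∀ (v : X) (M : Set ℕ), ∃ L : ℝ,
      StrongCesaro p
        (fun n => ∑ i ∈ (range n).filter (fun i => i ∈ M), (f i) v) L) :
    ∀ φ : (X →L[ℝ] ℝ) →L[ℝ] ℝ, Summable fun i => |φ (f i)| := by
  have hpointwise : ∀ v : X, Summable fun i => |f i v| := fun v =>
    summable_abs_of_forall_strongCesaro hp.le (h v)
  obtain ⟨C, hC⟩ := hbarrelled (unitCoeffSums f) fun v =>
    ⟨∑' i, |f i v|, fun g hg =>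
      abs_apply_le_tsum_of_mem_unitCoeffSums (ContinuousLinearMap.apply ℝ ℝ v) (hpointwise v) hg⟩
  exact summable_abs_apply_of_forall_mem_unitCoeffSums_norm_le hC
end
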